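/- Quaternion-valued Hill's equation: let T > 0, let a : ℝ → ℍ be continuous with a(t+T) = a(t), consider the system ẋ = A(t)x with A(t) = [[0, 1], [−a(t), 0]] ∈ ℍ^{2×2}, and let M be the principal fundamental matrix with M(0) = I. Let ρ₁, ρ₂ be the two characteristic multipliers (the standard eigenvalues of M(T), with multiplicity). Then Re(ρ₁) + Re(ρ₂) = Re(tr M(T)) and |ρ₁|·|ρ₂| = 1. Consequently, if |Re(tr M(T))| > 2, then one of the characteristic multipliers has modulus strictly greater than 1. -/

import Mathlib

/-!
The adjoint map `χ` is multiplicative and entrywise ℝ-linear, with `tr χ_X = 2 Re (tr X)`.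
Hence `N(t) = χ_{M(t)}` solves `N' = χ_{A(t)} N` with `tr χ_{A(t)} = 2 Re (tr A(t)) = 0`, and
Liouville's formula gives `det χ_{M(T)} = det χ_{M(0)} = 1`. The roots of the characteristic
polynomial of `χ_{M(T)}` are `ρ₁, ρ₂` and their conjugates, so its trace `2 Re (tr M(T))` equals
`2 (Re ρ₁ + Re ρ₂)` and its determinant is `|ρ₁|² |ρ₂|²`. The last claim follows from
`|Re ρ| ≤ |ρ|`.
-/

open Matrix Polynomial
open scoped Quaternion

noncomputable section

/-- The two complex components of a quaternion: `q = c1 q + (c2 q) * j`,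
identifying `ℂ` with the real span of `1` and `i` in `ℍ`. -/
def Quaternion.c1 (q : ℍ[ℝ]) : ℂ := ⟨q.re, q.imI⟩

def Quaternion.c2 (q : ℍ[ℝ]) : ℂ := ⟨q.imJ, q.imK⟩

/-- The embedding of `ℂ` into `ℍ` as the real span of `1` and `i`. -/
def Complex.toQuat (z : ℂ) : ℍ[ℝ] := ⟨z.re, z.im, 0, 0⟩

/-- The complex adjoint matrix `χ_A` of a quaternion matrix `A = A₁ + A₂·j`:
the block matrix `[[A₁, A₂], [-conj A₂, conj A₁]]`. -/
def chiMat {n : ℕ} (A : Matrix (Fin n) (Fin n) ℍ[ℝ]) :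
    Matrix (Fin n ⊕ Fin n) (Fin n ⊕ Fin n) ℂ :=
  Matrix.fromBlocks (A.map Quaternion.c1) (A.map Quaternion.c2)
    ((-(A.map Quaternion.c2)).map (starRingEnd ℂ)) ((A.map Quaternion.c1).map (starRingEnd ℂ))

/-- `ρ` is a standard eigenvalue of the quaternion matrix `A`: an eigenvalue of the
complex adjoint matrix `χ_A` with nonnegative imaginary part. -/
def IsStdEigenvalue {n : ℕ} (A : Matrix (Fin n) (Fin n) ℍ[ℝ]) (ρ : ℂ) : Prop :=
  (chiMat A).charpoly.IsRoot ρ ∧ 0 ≤ ρ.im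

/-- `s` is the multiset of standard eigenvalues of `A` counted with multiplicity:
it has `n` elements, all with nonnegative imaginary part, and the characteristic
polynomial of `χ_A` is `∏_{z ∈ s} (X - z)·(X - conj z)`. -/
def IsStdEigs {n : ℕ} (A : Matrix (Fin n) (Fin n) ℍ[ℝ]) (s : Multiset ℂ) : Prop :=
  Multiset.card s = n ∧ (∀ z ∈ s, 0 ≤ z.im) ∧
    (chiMat A).charpoly =
      (s.map (fun z => (X - C z) * (X - C (starRingEnd ℂ z)))).prod

/-- `x : ℝ → ℍ^n` is a solution of the linear quaternionic system `ẋ = A(t)x`. -/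
def IsSol {n : ℕ} (A : ℝ → Matrix (Fin n) (Fin n) ℍ[ℝ]) (x : ℝ → Fin n → ℍ[ℝ]) : Prop :=
  ∀ t : ℝ, HasDerivAt x ((A t).mulVec (x t)) t

/-- The norm `‖x‖ = Σ_k |x_k|` on `ℍ^n`. -/
def vecNorm {n : ℕ} (x : Fin n → ℍ[ℝ]) : ℝ := ∑ k, ‖x k‖

/-- The norm `‖A‖ = Σ_{i,j} |a_{ij}|` on `ℍ^{n×n}`. -/
def matNorm {n : ℕ} (A : Matrix (Fin n) (Fin n) ℍ[ℝ]) : ℝ := ∑ i, ∑ j, ‖A i j‖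

/-- Stability (in the sense of Lyapunov) of the system `ẋ = A(t)x` at `t₀`. -/
def StableAt {n : ℕ} (A : ℝ → Matrix (Fin n) (Fin n) ℍ[ℝ]) (t₀ : ℝ) : Prop :=
  ∀ ε > (0:ℝ), ∃ δ > (0:ℝ), ∀ x : ℝ → Fin n → ℍ[ℝ], IsSol A x →
    vecNorm (x t₀) < δ → ∀ t ≥ t₀, vecNorm (x t) < ε

/-- Asymptotic stability of the system `ẋ = A(t)x` at `t₀`. -/
def AsympStableAt {n : ℕ} (A : ℝ → Matrix (Fin n) (Fin n) ℍ[ℝ]) (t₀ : ℝ) : Prop :=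
  StableAt A t₀ ∧ ∃ δ > (0:ℝ), ∀ x : ℝ → Fin n → ℍ[ℝ], IsSol A x →
    vecNorm (x t₀) < δ →
      Filter.Tendsto (fun t => vecNorm (x t)) Filter.atTop (nhds 0)

/-- `M` is a fundamental matrix of `ẋ = A(t)x`: entrywise `M'(t) = A(t)·M(t)`
and `M(t)` is invertible for every `t`. -/
def IsFundamental {n : ℕ} (A M : ℝ → Matrix (Fin n) (Fin n) ℍ[ℝ]) : Prop :=
  (∀ (t : ℝ) (i j : Fin n), HasDerivAt (fun s => M s i j) ((A t * M t) i j) t) ∧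
    ∀ t : ℝ, IsUnit (M t)

open ComplexConjugate

namespace Quaternion

@[simp] lemma c1_re (q : ℍ[ℝ]) : (c1 q).re = q.re := rfl
@[simp] lemma c1_im (q : ℍ[ℝ]) : (c1 q).im = q.imI := rfl
@[simp] lemma c2_re (q : ℍ[ℝ]) : (c2 q).re = q.imJ := rfl
@[simp] lemma c2_im (q : ℍ[ℝ]) : (c2 q).im = q.imK := rfl

@[simp] lemma c1_one : c1 1 = 1 := by apply Complex.ext <;> simp
@[simp] lemma c2_one : c2 1 = 0 := by apply Complex.ext <;> simp
@[simp] lemma c1_zero : c1 0 = 0 := by apply Complex.ext <;> simp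
@[simp] lemma c2_zero : c2 0 = 0 := by apply Complex.ext <;> simp

lemma c1_mul (x y : ℍ[ℝ]) : c1 (x * y) = c1 x * c1 y - c2 x * conj (c2 y) := by
  apply Complex.ext <;> simp [Complex.mul_re, Complex.mul_im] <;> ring

lemma c2_mul (x y : ℍ[ℝ]) : c2 (x * y) = c1 x * c2 y + c2 x * conj (c1 y) := by
  apply Complex.ext <;> simp [Complex.mul_re, Complex.mul_im] <;> ring

def c1CLM : ℍ[ℝ] →L[ℝ] ℂ :=
  LinearMap.toContinuousLinearMap
    { toFun := c1
      map_add' := fun x y => by apply Complex.ext <;> simp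
      map_smul' := fun r x => by apply Complex.ext <;> simp }

def c2CLM : ℍ[ℝ] →L[ℝ] ℂ :=
  LinearMap.toContinuousLinearMap
    { toFun := c2
      map_add' := fun x y => by apply Complex.ext <;> simp
      map_smul' := fun r x => by apply Complex.ext <;> simp }

lemma c1_sum {ι : Type*} (s : Finset ι) (f : ι → ℍ[ℝ]) : c1 (∑ i ∈ s, f i) = ∑ i ∈ s, c1 (f i) :=
  map_sum c1CLM f s

lemma c2_sum {ι : Type*} (s : Finset ι) (f : ι → ℍ[ℝ]) : c2 (∑ i ∈ s, f i) = ∑ i ∈ s, c2 (f i) :=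
  map_sum c2CLM f s

lemma _root_.HasDerivAt.quaternion_c1 {f : ℝ → ℍ[ℝ]} {q : ℍ[ℝ]} {t : ℝ} (h : HasDerivAt f q t) :
    HasDerivAt (fun s => c1 (f s)) (c1 q) t :=
  c1CLM.hasFDerivAt.comp_hasDerivAt t h

lemma _root_.HasDerivAt.quaternion_c2 {f : ℝ → ℍ[ℝ]} {q : ℍ[ℝ]} {t : ℝ} (h : HasDerivAt f q t) :
    HasDerivAt (fun s => c2 (f s)) (c2 q) t :=
  c2CLM.hasFDerivAt.comp_hasDerivAt t h

end Quaternion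

open Quaternion

section ChiMat

variable {n : ℕ}

@[simp] lemma chiMat_one : chiMat (1 : Matrix (Fin n) (Fin n) ℍ[ℝ]) = 1 := by
  ext (i | i) (j | j) <;> by_cases h : i = j <;> simp [chiMat, Matrix.one_apply, h]

lemma chiMat_mul (A B : Matrix (Fin n) (Fin n) ℍ[ℝ]) : chiMat (A * B) = chiMat A * chiMat B := by
  ext (i | i) (j | j) <;>
  · simp only [chiMat, Matrix.fromBlocks_apply₁₁, Matrix.fromBlocks_apply₁₂,
      Matrix.fromBlocks_apply₂₁, Matrix.fromBlocks_apply₂₂, Matrix.mul_apply, Matrix.map_apply,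
      Matrix.neg_apply, Fintype.sum_sum_type, c1_sum, c2_sum, map_sum, map_neg,
      ← Finset.sum_neg_distrib, ← Finset.sum_add_distrib]
    refine Finset.sum_congr rfl fun k _ => ?_
    simp only [c1_mul, c2_mul, map_mul, map_add, map_sub, Complex.conj_conj] <;> ring

lemma trace_chiMat (A : Matrix (Fin n) (Fin n) ℍ[ℝ]) :
    (chiMat A).trace = ((2 * A.trace.re : ℝ) : ℂ) := by
  simp only [Matrix.trace, chiMat, Matrix.diag, Fintype.sum_sum_type, Matrix.fromBlocks_apply₁₁,
    Matrix.fromBlocks_apply₂₂, Matrix.map_apply, ← map_sum, ← c1_sum, Complex.add_conj, c1_re]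

lemma hasDerivAt_chiMat {M : ℝ → Matrix (Fin n) (Fin n) ℍ[ℝ]} {D : Matrix (Fin n) (Fin n) ℍ[ℝ]}
    {t : ℝ} (h : ∀ i j, HasDerivAt (fun s => M s i j) (D i j) t) (i j : Fin n ⊕ Fin n) :
    HasDerivAt (fun s => chiMat (M s) i j) (chiMat D i j) t := by
  rcases i with i | i <;> rcases j with j | j
  · exact (h i j).quaternion_c1
  · exact (h i j).quaternion_c2
  · exact (h i j).quaternion_c2.star.neg
  · exact (h i j).quaternion_c1.star

end ChiMat

namespace Matrix

variable {m : Type*} [Fintype m] [DecidableEq m]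

lemma sum_det_updateRow_mul {R : Type*} [CommRing R] (B N : Matrix m m R) :
    ∑ i, (N.updateRow i ((B * N) i)).det = B.trace * N.det := by
  have hrow : ∀ i, (B * N) i = ∑ k, B i k • N k := fun i => by
    ext j
    simp [Matrix.mul_apply, Finset.sum_apply]
  simp_rw [hrow, det_updateRow_sum]
  simp [trace, Finset.sum_mul]

variable {𝕜 R : Type*} [NontriviallyNormedField 𝕜] [NormedCommRing R] [NormedAlgebra 𝕜 R]

variable (𝕜 m R) in
def detRowCML : ContinuousMultilinearMap 𝕜 (fun _ : m => m → R) R where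
  toMultilinearMap := (detRowAlternating : (m → R) [⋀^m]→ₗ[R] R).toMultilinearMap.restrictScalars 𝕜
  cont := continuous_id.matrix_det

lemma hasDerivAt_det {N : 𝕜 → Matrix m m R} {N' : Matrix m m R} {t : 𝕜}
    (h : ∀ i j, HasDerivAt (fun s => N s i j) (N' i j) t) :
    HasDerivAt (fun s => (N s).det) (∑ i, ((N t).updateRow i (N' i)).det) t := by
  have hrows : HasDerivAt (fun s i => N s i) (fun i => N' i) t :=
    hasDerivAt_pi.2 fun i => hasDerivAt_pi.2 (h i)
  have := ((detRowCML m 𝕜 R).hasFDerivAt (fun i => N t i)).comp_hasDerivAt t hrows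
  rw [ContinuousMultilinearMap.linearDeriv_apply] at this
  exact this

lemma det_eq_det_of_hasDerivAt_mul_of_trace_eq_zero {𝕜 : Type*} [RCLike 𝕜] [NormedAlgebra 𝕜 R]
    {N B : 𝕜 → Matrix m m R} (hN : ∀ t i j, HasDerivAt (fun s => N s i j) ((B t * N t) i j) t)
    (hB : ∀ t, (B t).trace = 0) (t s : 𝕜) : (N t).det = (N s).det := by
  have hdet : ∀ t, HasDerivAt (fun s => (N s).det) 0 t := fun t => by
    simpa [sum_det_updateRow_mul, hB t] using hasDerivAt_det (hN t)
  exact is_const_of_deriv_eq_zero (fun t => (hdet t).differentiableAt) (fun t => (hdet t).deriv) t s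

end Matrix

lemma IsFundamental.det_chiMat_eq {n : ℕ} {A M : ℝ → Matrix (Fin n) (Fin n) ℍ[ℝ]}
    (hM : IsFundamental A M) (hA : ∀ t, (A t).trace.re = 0) (t s : ℝ) :
    (chiMat (M t)).det = (chiMat (M s)).det :=
  Matrix.det_eq_det_of_hasDerivAt_mul_of_trace_eq_zero (B := fun t => chiMat (A t))
    (fun t => by simpa only [chiMat_mul] using hasDerivAt_chiMat (hM.1 t))
    (fun t => by simp [trace_chiMat, hA t]) t s

namespace IsStdEigs

variable {n : ℕ} {A : Matrix (Fin n) (Fin n) ℍ[ℝ]} {s : Multiset ℂ}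

lemma roots_charpoly_chiMat (h : IsStdEigs A s) : (chiMat A).charpoly.roots = s + s.map conj := by
  rw [h.2.2, ← Polynomial.roots_multiset_prod_X_sub_C (s + s.map conj), Multiset.map_add,
    Multiset.prod_add, Multiset.map_map, ← Multiset.prod_map_mul]
  rfl

lemma re_trace (h : IsStdEigs A s) : A.trace.re = (s.map Complex.re).sum := by
  have key := congrArg Complex.re (chiMat A).trace_eq_sum_roots_charpoly
  rw [trace_chiMat, h.roots_charpoly_chiMat, Multiset.sum_add, ← map_multiset_sum conj,
    Complex.add_re, Complex.conj_re, Complex.ofReal_re] at key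
  have hre : s.sum.re = (s.map Complex.re).sum := map_multiset_sum Complex.reAddGroupHom s
  linarith

lemma det_chiMat (h : IsStdEigs A s) : (chiMat A).det = ((s.map Complex.normSq).prod : ℝ) := by
  rw [(chiMat A).det_eq_prod_roots_charpoly, h.roots_charpoly_chiMat, Multiset.prod_add,
    ← map_multiset_prod conj, Complex.mul_conj, map_multiset_prod Complex.normSq]

end IsStdEigs

lemma Complex.one_lt_norm_or_one_lt_norm_of_two_lt_abs_re_add {z w : ℂ} (h : 2 < |z.re + w.re|) :
    1 < ‖z‖ ∨ 1 < ‖w‖ := by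
  by_contra! hle
  have := (abs_add_le z.re w.re).trans (add_le_add (z.abs_re_le_norm) (w.abs_re_le_norm))
  linarith [hle.1, hle.2]

theorem stmt19_general (T : ℝ) (a : ℝ → ℍ[ℝ]) (A : ℝ → Matrix (Fin 2) (Fin 2) ℍ[ℝ])
    (hA : ∀ t, A t = !![0, 1; -a t, 0]) (M : ℝ → Matrix (Fin 2) (Fin 2) ℍ[ℝ])
    (hM : IsFundamental A M) (hM0 : M 0 = 1) (ρ₁ ρ₂ : ℂ)
    (hρ : IsStdEigs (M T) ({ρ₁, ρ₂} : Multiset ℂ)) :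
    ρ₁.re + ρ₂.re = (Matrix.trace (M T)).re ∧
    ‖ρ₁‖ * ‖ρ₂‖ = 1 ∧
    (2 < |(Matrix.trace (M T)).re| → 1 < ‖ρ₁‖ ∨ 1 < ‖ρ₂‖) := by
  have hdet : (chiMat (M T)).det = 1 := by
    rw [hM.det_chiMat_eq (fun t => by simp [hA t, Matrix.trace_fin_two]) T 0, hM0, chiMat_one,
      Matrix.det_one]
  have hre : ρ₁.re + ρ₂.re = (M T).trace.re := by simpa using hρ.re_trace.symm
  have hnormSq : Complex.normSq ρ₁ * Complex.normSq ρ₂ = 1 := by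
    have h := hρ.det_chiMat
    simp only [hdet, Multiset.insert_eq_cons, Multiset.map_cons, Multiset.map_singleton,
      Multiset.prod_cons, Multiset.prod_singleton] at h
    exact_mod_cast h.symm
  have hnorm : ‖ρ₁‖ * ‖ρ₂‖ = 1 := by
    rw [← pow_eq_one_iff_of_nonneg (by positivity) two_ne_zero, mul_pow, ← Complex.normSq_eq_norm_sq,
      ← Complex.normSq_eq_norm_sq, hnormSq]
  exact ⟨hre, hnorm, fun h => Complex.one_lt_norm_or_one_lt_norm_of_two_lt_abs_re_add (hre ▸ h)⟩

/-- for the quaternion-valued Hill equation, the characteristic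
multipliers `ρ₁, ρ₂` satisfy `Re ρ₁ + Re ρ₂ = Re(tr M(T))` and `|ρ₁|·|ρ₂| = 1`;
hence `|Re(tr M(T))| > 2` forces one multiplier to have modulus `> 1`. -/
theorem stmt19 (T : ℝ) (hT : 0 < T) (a : ℝ → ℍ[ℝ]) (ha : Continuous a)
    (haper : ∀ t, a (t + T) = a t) (A : ℝ → Matrix (Fin 2) (Fin 2) ℍ[ℝ])
    (hA : ∀ t, A t = !![0, 1; -a t, 0]) (M : ℝ → Matrix (Fin 2) (Fin 2) ℍ[ℝ])
    (hM : IsFundamental A M) (hM0 : M 0 = 1) (ρ₁ ρ₂ : ℂ)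
    (hρ : IsStdEigs (M T) ({ρ₁, ρ₂} : Multiset ℂ)) :
    ρ₁.re + ρ₂.re = (Matrix.trace (M T)).re ∧
    ‖ρ₁‖ * ‖ρ₂‖ = 1 ∧
    (2 < |(Matrix.trace (M T)).re| → 1 < ‖ρ₁‖ ∨ 1 < ‖ρ₂‖) :=
  stmt19_general T a A hA M hM hM0 ρ₁ ρ₂ hρ
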